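/- arXiv:1110.2540 — 4 statements merged into one kernel-verified Lean document; each statement's English description precedes it below -/
import Mathlib

section
/- Let μ be a finite complex Borel measure on ℝ with all finite moments (∫|t|^n d|μ|(t) < ∞ for all n) that annihilates all polynomials (∫ t^n dμ(t) = 0 for all n ≥ 0). Then for every n > 0, the Cauchy integral Kμ(iy) = (1/π)∫ (t - iy)⁻¹ dμ(t) satisfies Kμ(iy) = o(y^{-n}) as y → ∞. -/
open MeasureTheory Filter Asymptotics Topology

/-!
Expanding `1 / (t - z) = -∑_{k<n} t^k / z^(k+1) + t^n / (z^n (t - z))` and integrating against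
`f dμ`, the polynomial part vanishes, so `∫ f / (t - z) = z^(-n) ∫ t^n f / (t - z)`.
For `z = iy` we have `|t - iy| ≥ y`, whence `|Kμ(iy)| ≤ C_n y^(-n-1) = o(y^(-n))`, with
`C_n = ∫ |t|^n d|μ|`.
-/

lemma Complex.norm_inv_ofReal_sub_le (t : ℝ) {z : ℂ} (hz : z.im ≠ 0) :
    ‖((t : ℂ) - z)⁻¹‖ ≤ |z.im|⁻¹ := by
  rw [norm_inv]
  refine inv_anti₀ (abs_pos.mpr hz) ?_
  simpa using Complex.abs_im_le_norm ((t : ℂ) - z)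

section Moments

variable {μ : Measure ℝ} {f : ℝ → ℂ} {z : ℂ}

lemma integrable_ofReal_pow_mul (hf : AEStronglyMeasurable f μ) {m : ℕ}
    (hm : Integrable (fun t => |t| ^ m * ‖f t‖) μ) :
    Integrable (fun t : ℝ => (t : ℂ) ^ m * f t) μ := by
  refine (integrable_norm_iff ((Complex.continuous_ofReal.pow m).aestronglyMeasurable.mul hf)).mp ?_
  simpa only [Pi.mul_apply, Pi.pow_apply, norm_mul, norm_pow, Complex.norm_real,
    Real.norm_eq_abs] using hm

lemma integrable_inv_ofReal_sub_mul (hz : z.im ≠ 0) {g : ℝ → ℂ} (hg : Integrable g μ) :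
    Integrable (fun t : ℝ => ((t : ℂ) - z)⁻¹ * g t) μ :=
  hg.bdd_mul (by fun_prop) (ae_of_all _ fun t => Complex.norm_inv_ofReal_sub_le t hz)

lemma integral_inv_ofReal_sub_mul_eq_of_moments_eq_zero (hf : AEStronglyMeasurable f μ)
    (hz : z.im ≠ 0) {m : ℕ} (hmom : ∀ k ≤ m, Integrable (fun t => |t| ^ k * ‖f t‖) μ)
    (hann : ∀ k < m, ∫ t, (t : ℂ) ^ k * f t ∂μ = 0) :
    ∫ t, ((t : ℂ) - z)⁻¹ * f t ∂μ = z⁻¹ ^ m * ∫ t, ((t : ℂ) - z)⁻¹ * ((t : ℂ) ^ m * f t) ∂μ := by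
  induction m with
  | zero => simp
  | succ m ih =>
    have hz0 : z ≠ 0 := fun h => hz (by simp [h])
    have hsub : ∀ t : ℝ, (t : ℂ) - z ≠ 0 := fun t h => hz (by simpa using congrArg Complex.im h)
    have hpow := integrable_ofReal_pow_mul hf (hmom m m.le_succ)
    have hsplit : ∀ t : ℝ, ((t : ℂ) - z)⁻¹ * ((t : ℂ) ^ (m + 1) * f t)
        = (t : ℂ) ^ m * f t + z * (((t : ℂ) - z)⁻¹ * ((t : ℂ) ^ m * f t)) := by
      intro t
      -- `t^(m+1) = t^m (t - z) + z t^m`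
      field_simp [hsub t]
      ring
    have hstep : ∫ t, ((t : ℂ) - z)⁻¹ * ((t : ℂ) ^ (m + 1) * f t) ∂μ
        = z * ∫ t, ((t : ℂ) - z)⁻¹ * ((t : ℂ) ^ m * f t) ∂μ := by
      simp only [hsplit]
      rw [integral_add hpow ((integrable_inv_ofReal_sub_mul hz hpow).const_mul z),
        hann m m.lt_succ_self, integral_const_mul, zero_add]
    rw [ih (fun k hk => hmom k (hk.trans m.le_succ)) (fun k hk => hann k (hk.trans m.lt_succ_self)),
      hstep, pow_succ, mul_assoc, inv_mul_cancel_left₀ hz0]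

lemma norm_integral_inv_ofReal_sub_mul_le_of_moments_eq_zero (hf : AEStronglyMeasurable f μ)
    (hz : z.im ≠ 0) {m : ℕ} (hmom : ∀ k ≤ m, Integrable (fun t => |t| ^ k * ‖f t‖) μ)
    (hann : ∀ k < m, ∫ t, (t : ℂ) ^ k * f t ∂μ = 0) :
    ‖∫ t, ((t : ℂ) - z)⁻¹ * f t ∂μ‖ ≤ ‖z‖⁻¹ ^ m * (|z.im|⁻¹ * ∫ t, |t| ^ m * ‖f t‖ ∂μ) := by
  rw [integral_inv_ofReal_sub_mul_eq_of_moments_eq_zero hf hz hmom hann, norm_mul, norm_pow,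
    norm_inv, ← integral_const_mul]
  gcongr
  refine norm_integral_le_of_norm_le ((hmom m le_rfl).const_mul _) (ae_of_all _ fun t => ?_)
  rw [norm_mul, norm_mul, norm_pow, Complex.norm_real, Real.norm_eq_abs]
  exact mul_le_mul_of_nonneg_right (Complex.norm_inv_ofReal_sub_le t hz) (by positivity)

end Moments

theorem cauchy_transform_superpolynomial_decay_of_annihilates_general
    (μ : Measure ℝ) (f : ℝ → ℂ)
    (hf : AEStronglyMeasurable f μ)
    (hmom : ∀ n : ℕ, Integrable (fun t => |t| ^ n * ‖f t‖) μ)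
    (hann : ∀ n : ℕ, ∫ t, (t : ℂ) ^ n * f t ∂μ = 0) :
    ∀ n : ℕ, 0 < n →
      (fun y : ℝ => (1 / (Real.pi : ℂ)) * ∫ t, ((t : ℂ) - Complex.I * y)⁻¹ * f t ∂μ)
        =o[atTop] fun y : ℝ => y ^ (-(n : ℝ)) := by
  intro n _
  have hbigO : (fun y : ℝ => ∫ t, ((t : ℂ) - Complex.I * y)⁻¹ * f t ∂μ)
      =O[atTop] fun y : ℝ => y ^ (-(n : ℝ)) * y⁻¹ := by
    refine IsBigO.of_bound (∫ t, |t| ^ n * ‖f t‖ ∂μ) ?_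
    filter_upwards [eventually_gt_atTop 0] with y hy
    have hz : (Complex.I * y).im ≠ 0 := by simpa using hy.ne'
    have hbound := norm_integral_inv_ofReal_sub_mul_le_of_moments_eq_zero (m := n) hf hz
      (fun k _ => hmom k) (fun k _ => hann k)
    rw [Real.norm_eq_abs, abs_of_nonneg (by positivity), Real.rpow_neg hy.le, Real.rpow_natCast]
    simpa [inv_pow, abs_of_pos hy, mul_comm, mul_left_comm, mul_assoc] using hbound
  have hlittleO : (fun y : ℝ => y ^ (-(n : ℝ)) * y⁻¹) =o[atTop] fun y : ℝ => y ^ (-(n : ℝ)) := by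
    simpa using (isBigO_refl (fun y : ℝ => y ^ (-(n : ℝ))) atTop).mul_isLittleO
      ((isLittleO_one_iff ℝ).mpr tendsto_inv_atTop_zero)
  exact (hbigO.const_mul_left _).trans_isLittleO hlittleO

/-- If a finite complex measure `f dμ` on ℝ has all finite moments and
annihilates all polynomials, then its Cauchy integral `Kμ(iy)` is `o(y^{-n})` as `y → ∞`
for every `n > 0`. -/
theorem cauchy_transform_superpolynomial_decay_of_annihilates
    (μ : Measure ℝ) [IsFiniteMeasure μ] (f : ℝ → ℂ)
    (hf : AEStronglyMeasurable f μ)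
    (hmom : ∀ n : ℕ, Integrable (fun t => |t| ^ n * ‖f t‖) μ)
    (hann : ∀ n : ℕ, ∫ t, (t : ℂ) ^ n * f t ∂μ = 0) :
    ∀ n : ℕ, 0 < n →
      (fun y : ℝ => (1 / (Real.pi : ℂ)) * ∫ t, ((t : ℂ) - Complex.I * y)⁻¹ * f t ∂μ)
        =o[atTop] fun y : ℝ => y ^ (-(n : ℝ)) :=
  cauchy_transform_superpolynomial_decay_of_annihilates_general μ f hf hmom hann
end

section
/- Let 0 < p < ∞ and let μ be a positive finite measure on ℝ such that all polynomials belong to L^p(μ). If there exists a lower semicontinuous weight W : ℝ → [1,∞] with x^n = o(W(x)) as |x| → ∞ for every n, and a finite positive measure ν with μ = W^{−p} ν, such that polynomials are dense in C_W, then polynomials are dense in L^p(μ). -/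
open MeasureTheory Filter Topology
open scoped ENNReal

/-- A weight: lower semicontinuous `W : ℝ → [1,∞]` with `xⁿ = o(W)` as `|x| → ∞`. -/
def IsWeight (W : ℝ → ℝ≥0∞) : Prop :=
  LowerSemicontinuous W ∧ (∀ x, 1 ≤ W x) ∧
    ∀ n : ℕ, Tendsto (fun x : ℝ => ENNReal.ofReal (|x| ^ n) / W x) (atBot ⊔ atTop) (𝓝 0)

/-- Membership in `C_W`: continuous `f` with `f/W → 0` at `±∞`. -/
def MemCW (W : ℝ → ℝ≥0∞) (f : ℝ → ℝ) : Prop :=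
  Continuous f ∧ Tendsto (fun x => ENNReal.ofReal |f x| / W x) (atBot ⊔ atTop) (𝓝 0)

/-- Density of polynomials in `C_W` w.r.t. the seminorm `sup |f|/W`. -/
def PolyDenseCW (W : ℝ → ℝ≥0∞) : Prop :=
  ∀ f : ℝ → ℝ, MemCW W f → ∀ ε : ℝ, 0 < ε →
    ∃ s : Polynomial ℝ, ∀ x, ENNReal.ofReal |f x - s.eval x| ≤ ENNReal.ofReal ε * W x

/-!
Approximate `f` in `Lᵖ(μ)` by a continuous compactly supported `g`; such a `g` lies in
`C_W`, and a polynomial `s` with `|g - s| ≤ δ W` satisfies `‖g - s‖_{Lᵖ(μ)} ≤ δ ν(ℝ)^{1/p}`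
because `μ = W^{-p} ν`. For `p < 1` the two approximations are combined by the
quasi-triangle inequality.
-/

theorem HasCompactSupport.memCW {W : ℝ → ℝ≥0∞} {g : ℝ → ℝ}
    (hgc : HasCompactSupport g) (hg : Continuous g) : MemCW W g := by
  refine ⟨hg, tendsto_const_nhds.congr' ?_⟩
  rw [hasCompactSupport_iff_eventuallyEq, coclosedCompact_eq_cocompact,
    cocompact_eq_atBot_atTop] at hgc
  filter_upwards [hgc] with x hx
  simp [hx]

theorem eLpNorm_withDensity_rpow_neg_le {α E : Type*} [MeasurableSpace α]
    [NormedAddCommGroup E] {p : ℝ} (hp : 0 < p) (ν : Measure α) {W : α → ℝ≥0∞}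
    (hW : Measurable W) {h : α → E} {c : ℝ≥0∞} (hc : ∀ x, ‖h x‖ₑ ≤ c * W x) :
    eLpNorm h (ENNReal.ofReal p) (ν.withDensity fun x => W x ^ (-p)) ≤
      c * ν Set.univ ^ p⁻¹ := by
  have hpointwise : ∀ x, W x ^ (-p) * ‖h x‖ₑ ^ p ≤ c ^ p := fun x => by
    calc W x ^ (-p) * ‖h x‖ₑ ^ p = (‖h x‖ₑ / W x) ^ p := by
          rw [ENNReal.div_rpow_of_nonneg _ _ hp.le, div_eq_mul_inv, ← ENNReal.rpow_neg,
            mul_comm]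
      _ ≤ c ^ p := ENNReal.rpow_le_rpow (ENNReal.div_le_of_le_mul (hc x)) hp.le
  have hintegral :
      ∫⁻ x, ‖h x‖ₑ ^ p ∂ν.withDensity (fun x => W x ^ (-p)) ≤ c ^ p * ν Set.univ :=
    calc ∫⁻ x, ‖h x‖ₑ ^ p ∂ν.withDensity (fun x => W x ^ (-p))
        ≤ ∫⁻ x, W x ^ (-p) * ‖h x‖ₑ ^ p ∂ν :=
          lintegral_withDensity_le_lintegral_mul ν (hW.pow_const (-p)) _
      _ ≤ ∫⁻ _, c ^ p ∂ν := lintegral_mono hpointwise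
      _ = c ^ p * ν Set.univ := lintegral_const _
  rw [eLpNorm_eq_lintegral_rpow_enorm_toReal (by simpa using hp) ENNReal.ofReal_ne_top,
    ENNReal.toReal_ofReal hp.le, one_div]
  calc (∫⁻ x, ‖h x‖ₑ ^ p ∂ν.withDensity (fun x => W x ^ (-p))) ^ p⁻¹
      ≤ (c ^ p * ν Set.univ) ^ p⁻¹ := ENNReal.rpow_le_rpow hintegral (by positivity)
    _ = c * ν Set.univ ^ p⁻¹ := by
      rw [ENNReal.mul_rpow_of_nonneg _ _ (by positivity), ← ENNReal.rpow_mul,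
        mul_inv_cancel₀ hp.ne', ENNReal.rpow_one]

theorem PolyDenseCW.exists_eLpNorm_sub_le {W : ℝ → ℝ≥0∞} (hdense : PolyDenseCW W)
    (hW : Measurable W) {p : ℝ} (hp : 0 < p) (ν : Measure ℝ) [IsFiniteMeasure ν]
    {g : ℝ → ℝ} (hg : MemCW W g) {η : ℝ≥0∞} (hη : η ≠ 0) :
    ∃ s : Polynomial ℝ, eLpNorm (fun x => g x - s.eval x) (ENNReal.ofReal p)
      (ν.withDensity fun x => W x ^ (-p)) ≤ η := by
  have hν : ν Set.univ ^ p⁻¹ ≠ ∞ := ENNReal.rpow_ne_top_of_nonneg (by positivity) (by simp)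
  obtain ⟨c, hc, hcη⟩ := ENNReal.exists_nnreal_pos_mul_lt hν hη
  obtain ⟨s, hs⟩ := hdense g hg c hc
  refine ⟨s, (eLpNorm_withDensity_rpow_neg_le hp ν hW fun x => ?_).trans hcη.le⟩
  simpa [Real.enorm_eq_ofReal_abs] using hs x

theorem polyDense_Lp_of_polyDense_CW_general
    (p : ℝ) (hp : 0 < p) (μ ν : Measure ℝ) [IsFiniteMeasure μ] [IsFiniteMeasure ν]
    (W : ℝ → ℝ≥0∞) (hW : IsWeight W)
    (hμν : μ = ν.withDensity fun x => W x ^ (-p))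
    (hdense : PolyDenseCW W) :
    ∀ f : ℝ → ℝ, MemLp f (ENNReal.ofReal p) μ → ∀ ε : ℝ, 0 < ε →
      ∃ s : Polynomial ℝ,
        eLpNorm (fun x => f x - s.eval x) (ENNReal.ofReal p) μ < ENNReal.ofReal ε := by
  intro f hf ε hε
  set C := ENNReal.LpAddConst (ENNReal.ofReal p)
  have hC : 2 * C ≠ ∞ :=
    ENNReal.mul_ne_top ENNReal.ofNat_ne_top (ENNReal.LpAddConst_lt_top _).ne
  obtain ⟨η, hη, hηε⟩ := ENNReal.exists_pos_mul_lt hC (ENNReal.ofReal_pos.2 hε).ne'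
  obtain ⟨g, hgc, hfg, hg, -⟩ :=
    hf.exists_hasCompactSupport_eLpNorm_sub_le ENNReal.ofReal_ne_top hη.ne'
  obtain ⟨s, hgs⟩ := hdense.exists_eLpNorm_sub_le hW.1.measurable hp ν (hgc.memCW hg) hη.ne'
  rw [← hμν] at hgs
  refine ⟨s, ?_⟩
  calc eLpNorm (fun x => f x - s.eval x) (ENNReal.ofReal p) μ
      = eLpNorm ((f - g) + fun x => g x - s.eval x) (ENNReal.ofReal p) μ := by
        congr 1; ext x; simp
    _ ≤ C * (eLpNorm (f - g) (ENNReal.ofReal p) μ +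
          eLpNorm (fun x => g x - s.eval x) (ENNReal.ofReal p) μ) :=
        eLpNorm_add_le' (hf.aestronglyMeasurable.sub hg.aestronglyMeasurable)
          (hg.sub s.continuous).aestronglyMeasurable _
    _ ≤ C * (η + η) := by gcongr
    _ = η * (2 * C) := by ring
    _ < ENNReal.ofReal ε := hηε

/-- Bakan, easy direction: if `μ = W^{-p} ν` for a weight `W` with polynomials
dense in `C_W`, then polynomials are dense in `Lᵖ(μ)`. -/
theorem polyDense_Lp_of_polyDense_CW
    (p : ℝ) (hp : 0 < p) (μ ν : Measure ℝ) [IsFiniteMeasure μ] [IsFiniteMeasure ν]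
    (hpoly : ∀ s : Polynomial ℝ, MemLp s.eval (ENNReal.ofReal p) μ)
    (W : ℝ → ℝ≥0∞) (hW : IsWeight W)
    (hμν : μ = ν.withDensity fun x => W x ^ (-p))
    (hdense : PolyDenseCW W) :
    ∀ f : ℝ → ℝ, MemLp f (ENNReal.ofReal p) μ → ∀ ε : ℝ, 0 < ε →
      ∃ s : Polynomial ℝ,
        eLpNorm (fun x => f x - s.eval x) (ENNReal.ofReal p) μ < ENNReal.ofReal ε :=
  polyDense_Lp_of_polyDense_CW_general p hp μ ν W hW hμν hdense
end

section
/- Let ν ≠ 0 be a finite real measure on ℝ annihilating polynomials, and suppose ν is an extreme point of the set S = { σ real measure : ∫W d|σ| ≤ 1, supp σ ⊆ supp ν, σ ⊥ polynomials } (for a weight W with ∫W d|ν| ≤ 1). Then the set of real functions h ∈ L^∞(|ν|) with hν ⊥ polynomials is one-dimensional, i.e., every such h is |ν|-a.e. constant. -/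
/-!
Bounded `h` with `hν ⊥ 𝒫` can be shifted and scaled to a density `p` with values in `(0, 1)`,
still with `pν ⊥ 𝒫`. With `a = ∫ W p d|ν|`, the splitting `ν = pν + (1 - p)ν` becomes the convex
combination `ν = a • (pν / a) + (1 - a) • ((1 - p)ν / (1 - a))` of two elements of `S`: the first
has `W`-mass exactly `1`, the second at most `1` because `∫ W d|ν| ≤ 1`. Extremity forces
`p / a = (1 - p) / (1 - a)` a.e., that is `p = a`.
-/

open MeasureTheory Filter Topology
open scoped ENNReal

section

variable {ρ : Measure ℝ} {W : ℝ → ℝ≥0∞}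

def HasFiniteAbsMoments (ρ : Measure ℝ) (g : ℝ → ℝ) : Prop :=
  ∀ n : ℕ, Integrable (fun x => |x| ^ n * |g x|) ρ

def AnnihilatesPolynomials (ρ : Measure ℝ) (g : ℝ → ℝ) : Prop :=
  ∀ n : ℕ, ∫ x, x ^ n * g x ∂ρ = 0

/-- `g` is the density `dσ / dρ` of a measure `σ ∈ S`; taking densities with respect to
`ρ = |ν|` is what encodes `supp σ ⊆ supp ν`. -/
def MemAnnihilatorBall (ρ : Measure ℝ) (W : ℝ → ℝ≥0∞) (g : ℝ → ℝ) : Prop :=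
  Measurable g ∧ (∫⁻ x, W x * ENNReal.ofReal |g x| ∂ρ) ≤ 1 ∧
    HasFiniteAbsMoments ρ g ∧ AnnihilatesPolynomials ρ g

theorem HasFiniteAbsMoments.integrable_pow_mul {g : ℝ → ℝ} (hg : HasFiniteAbsMoments ρ g)
    (hgm : AEStronglyMeasurable g ρ) (n : ℕ) : Integrable (fun x => x ^ n * g x) ρ :=
  (hg n).mono' ((continuous_pow n).aestronglyMeasurable.mul hgm)
    (ae_of_all _ fun x => by rw [Real.norm_eq_abs, abs_mul, abs_pow])

theorem HasFiniteAbsMoments.bdd_mul {g φ : ℝ → ℝ} {C : ℝ} (hg : HasFiniteAbsMoments ρ g)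
    (hφm : AEStronglyMeasurable φ ρ) (hφ : ∀ᵐ x ∂ρ, |φ x| ≤ C) :
    HasFiniteAbsMoments ρ (fun x => φ x * g x) := fun n => by
  have := (hg n).bdd_mul hφm.norm (c := C) (by simpa only [Real.norm_eq_abs, abs_abs] using hφ)
  refine this.congr (ae_of_all _ fun x => ?_)
  simp only [Real.norm_eq_abs, abs_mul]
  ring

theorem AnnihilatesPolynomials.linear_combination {f₁ f₂ : ℝ → ℝ}
    (h₁ : AnnihilatesPolynomials ρ f₁) (h₂ : AnnihilatesPolynomials ρ f₂)
    (hi₁ : ∀ n : ℕ, Integrable (fun x => x ^ n * f₁ x) ρ)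
    (hi₂ : ∀ n : ℕ, Integrable (fun x => x ^ n * f₂ x) ρ) (s t : ℝ) :
    AnnihilatesPolynomials ρ (fun x => s * f₁ x + t * f₂ x) := fun n => by
  have hsplit : (fun x => x ^ n * (s * f₁ x + t * f₂ x))
      = fun x => s * (x ^ n * f₁ x) + t * (x ^ n * f₂ x) := by
    funext x; ring
  rw [hsplit, integral_add ((hi₁ n).const_mul s) ((hi₂ n).const_mul t), integral_const_mul,
    integral_const_mul, h₁ n, h₂ n, mul_zero, mul_zero, add_zero]

theorem AnnihilatesPolynomials.const_mul {f : ℝ → ℝ} (hf : AnnihilatesPolynomials ρ f)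
    (s : ℝ) : AnnihilatesPolynomials ρ (fun x => s * f x) := fun n => by
  simp_rw [mul_left_comm _ s, integral_const_mul, hf n, mul_zero]

theorem AnnihilatesPolynomials.affine_mul {f g : ℝ → ℝ} {M : ℝ}
    (hg : AnnihilatesPolynomials ρ g) (hfg : AnnihilatesPolynomials ρ (fun x => f x * g x))
    (hmom : HasFiniteAbsMoments ρ g) (hgm : AEStronglyMeasurable g ρ)
    (hfm : AEStronglyMeasurable f ρ) (hf : ∀ᵐ x ∂ρ, |f x| ≤ M) (s t : ℝ) :
    AnnihilatesPolynomials ρ (fun x => (s * f x + t) * g x) := by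
  have hcomb := hfg.linear_combination hg
    ((hmom.bdd_mul hfm hf).integrable_pow_mul (hfm.mul hgm)) (hmom.integrable_pow_mul hgm) s t
  simpa only [add_mul, mul_assoc] using hcomb

theorem lintegral_mul_ofReal_pos (hρ : ρ ≠ 0) (hW1 : ∀ x, 1 ≤ W x)
    {q : ℝ → ℝ} (hqm : AEMeasurable q ρ) (hq : ∀ᵐ x ∂ρ, 0 < q x) :
    0 < ∫⁻ x, W x * ENNReal.ofReal (q x) ∂ρ := by
  have hpos : 0 < ∫⁻ x, ENNReal.ofReal (q x) ∂ρ := by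
    rw [pos_iff_ne_zero, Ne, lintegral_eq_zero_iff' hqm.ennreal_ofReal]
    intro h0
    refine hρ (ae_eq_bot.mp (eventually_false_iff_eq_bot.mp ?_))
    filter_upwards [h0, hq] with x h0x hqx
    exact (ENNReal.ofReal_pos.mpr hqx).ne' h0x
  exact hpos.trans_le (lintegral_mono fun x => le_mul_of_one_le_left' (hW1 x))

theorem lintegral_mul_ofReal_add_one_sub_le {p g : ℝ → ℝ}
    (hp : ∀ᵐ x ∂ρ, p x ∈ Set.Icc 0 1) (hg : ∀ᵐ x ∂ρ, |g x| = 1) :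
    (∫⁻ x, W x * ENNReal.ofReal (p x) ∂ρ) + ∫⁻ x, W x * ENNReal.ofReal (1 - p x) ∂ρ
      ≤ ∫⁻ x, W x * ENNReal.ofReal |g x| ∂ρ := by
  refine (le_lintegral_add _ _).trans_eq (lintegral_congr_ae ?_)
  filter_upwards [hp, hg] with x ⟨hp0, hp1⟩ hgx
  rw [← mul_add, ← ENNReal.ofReal_add hp0 (sub_nonneg.mpr hp1), add_sub_cancel, hgx]

theorem lintegral_mul_ofReal_abs_div_mul {q g : ℝ → ℝ}
    (hq : ∀ᵐ x ∂ρ, 0 ≤ q x) (hg : ∀ᵐ x ∂ρ, |g x| = 1) {t : ℝ} (ht : 0 < t) :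
    ∫⁻ x, W x * ENNReal.ofReal |q x / t * g x| ∂ρ
      = (∫⁻ x, W x * ENNReal.ofReal (q x) ∂ρ) * ENNReal.ofReal t⁻¹ := by
  rw [← lintegral_mul_const' _ _ ENNReal.ofReal_ne_top]
  refine lintegral_congr_ae ?_
  filter_upwards [hq, hg] with x hqx hgx
  rw [abs_mul, hgx, mul_one, abs_div, abs_of_nonneg hqx, abs_of_pos ht, div_eq_mul_inv,
    ENNReal.ofReal_mul hqx, mul_assoc]

theorem exists_lintegral_mul_ofReal_split (hρ : ρ ≠ 0) (hW1 : ∀ x, 1 ≤ W x) {g p : ℝ → ℝ}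
    (hWg : (∫⁻ x, W x * ENNReal.ofReal |g x| ∂ρ) ≤ 1) (hg : ∀ᵐ x ∂ρ, |g x| = 1)
    (hpm : AEMeasurable p ρ) (hp : ∀ᵐ x ∂ρ, p x ∈ Set.Ioo 0 1) :
    ∃ a : ℝ, 0 < a ∧ a < 1 ∧ ∫⁻ x, W x * ENNReal.ofReal (p x) ∂ρ = ENNReal.ofReal a ∧
      ∫⁻ x, W x * ENNReal.ofReal (1 - p x) ∂ρ ≤ ENNReal.ofReal (1 - a) := by
  set A := ∫⁻ x, W x * ENNReal.ofReal (p x) ∂ρ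
  set B := ∫⁻ x, W x * ENNReal.ofReal (1 - p x) ∂ρ
  have hsum : A + B ≤ 1 :=
    (lintegral_mul_ofReal_add_one_sub_le (hp.mono fun x hx => Set.Ioo_subset_Icc_self hx)
      hg).trans hWg
  have hA : 0 < A := lintegral_mul_ofReal_pos hρ hW1 hpm (hp.mono fun x hx => hx.1)
  have hB : 0 < B :=
    lintegral_mul_ofReal_pos hρ hW1 (aemeasurable_const.sub hpm)
      (hp.mono fun x hx => sub_pos.mpr hx.2)
  have hAtop : A ≠ ⊤ := ne_top_of_le_ne_top ENNReal.one_ne_top (le_self_add.trans hsum)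
  have hA1 : A < 1 := (ENNReal.lt_add_right hAtop hB.ne').trans_le hsum
  refine ⟨A.toReal, ENNReal.toReal_pos hA.ne' hAtop,
    ENNReal.toReal_lt_of_lt_ofReal (by rwa [ENNReal.ofReal_one]),
    (ENNReal.ofReal_toReal hAtop).symm, ?_⟩
  rw [ENNReal.ofReal_sub _ ENNReal.toReal_nonneg, ENNReal.ofReal_one,
    ENNReal.ofReal_toReal hAtop]
  exact ENNReal.le_sub_of_add_le_left hAtop hsum

theorem memAnnihilatorBall_div_mul {g₀ q : ℝ → ℝ} {t : ℝ} (hg₀m : Measurable g₀)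
    (hmom : HasFiniteAbsMoments ρ g₀) (hg₀1 : ∀ᵐ x ∂ρ, |g₀ x| = 1) (hqm : Measurable q)
    (hq : ∀ᵐ x ∂ρ, q x ∈ Set.Icc 0 1) (hqW : ∫⁻ x, W x * ENNReal.ofReal (q x) ∂ρ ≤ ENNReal.ofReal t)
    (ht : 0 < t) (hqann : AnnihilatesPolynomials ρ (fun x => q x * g₀ x)) :
    MemAnnihilatorBall ρ W (fun x => q x / t * g₀ x) := by
  refine ⟨(hqm.div_const t).mul hg₀m, ?_, hmom.bdd_mul (C := t⁻¹)
    (hqm.div_const t).aestronglyMeasurable ?_, ?_⟩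
  · rw [lintegral_mul_ofReal_abs_div_mul (hq.mono fun x hx => hx.1) hg₀1 ht]
    calc _ ≤ ENNReal.ofReal t * ENNReal.ofReal t⁻¹ := mul_le_mul_left hqW _
      _ = 1 := by rw [← ENNReal.ofReal_mul ht.le, mul_inv_cancel₀ ht.ne', ENNReal.ofReal_one]
  · filter_upwards [hq] with x ⟨hq0, hq1⟩
    rw [abs_div, abs_of_nonneg hq0, abs_of_pos ht, div_eq_mul_inv]
    exact mul_le_of_le_one_left (inv_nonneg.mpr ht.le) hq1
  · simpa only [div_eq_inv_mul, mul_assoc] using hqann.const_mul t⁻¹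

theorem ae_eq_const_of_isExtreme (hρ : ρ ≠ 0) (hW1 : ∀ x, 1 ≤ W x) {g₀ p : ℝ → ℝ}
    (hg₀ : MemAnnihilatorBall ρ W g₀) (hg₀1 : ∀ᵐ x ∂ρ, |g₀ x| = 1)
    (hext : ∀ g₁ g₂ : ℝ → ℝ, MemAnnihilatorBall ρ W g₁ → MemAnnihilatorBall ρ W g₂ →
      ∀ α : ℝ, 0 < α → α < 1 →
        (∀ᵐ x ∂ρ, g₀ x = α * g₁ x + (1 - α) * g₂ x) → g₁ =ᵐ[ρ] g₂)
    (hpm : Measurable p) (hp : ∀ᵐ x ∂ρ, p x ∈ Set.Ioo 0 1)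
    (hpann : AnnihilatesPolynomials ρ (fun x => p x * g₀ x)) :
    ∃ c : ℝ, ∀ᵐ x ∂ρ, p x = c := by
  obtain ⟨hg₀m, hWg₀, hmom, hann⟩ := hg₀
  obtain ⟨a, ha0, ha1, hA, hB⟩ :=
    exists_lintegral_mul_ofReal_split hρ hW1 hWg₀ hg₀1 hpm.aemeasurable hp
  have hp' : ∀ᵐ x ∂ρ, p x ∈ Set.Icc 0 1 := hp.mono fun x hx => Set.Ioo_subset_Icc_self hx
  have h1pann : AnnihilatesPolynomials ρ (fun x => (1 - p x) * g₀ x) := by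
    simpa only [neg_one_mul, neg_add_eq_sub] using
      hann.affine_mul hpann hmom hg₀m.aestronglyMeasurable hpm.aestronglyMeasurable
        (hp'.mono fun x hx => abs_le.mpr ⟨by linarith [hx.1], hx.2⟩) (-1) 1
  have hg₁ := memAnnihilatorBall_div_mul hg₀m hmom hg₀1 hpm hp' hA.le ha0 hpann
  have hg₂ := memAnnihilatorBall_div_mul (q := fun x => 1 - p x) hg₀m hmom hg₀1
    (measurable_const.sub hpm)
    (hp'.mono fun x hx => ⟨sub_nonneg.mpr hx.2, by linarith [hx.1]⟩) hB (sub_pos.mpr ha1)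
    h1pann
  have hdecomp : ∀ᵐ x ∂ρ,
      g₀ x = a * (p x / a * g₀ x) + (1 - a) * ((1 - p x) / (1 - a) * g₀ x) :=
    ae_of_all _ fun x => by
      field_simp [(sub_pos.mpr ha1).ne']
      ring
  refine ⟨a, ?_⟩
  filter_upwards [hext _ _ hg₁ hg₂ a ha0 ha1 hdecomp, hg₀1] with x hx hgx
  have hg₀x : g₀ x ≠ 0 := fun h0 => by simp [h0] at hgx
  have hratio := mul_right_cancel₀ hg₀x hx
  field_simp [(sub_pos.mpr ha1).ne'] at hratio
  linarith

end

theorem extreme_annihilating_measure_deficiency_one_general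
    (ρ : Measure ℝ) (hρ : ρ ≠ 0)
    (W : ℝ → ℝ≥0∞) (hW1 : ∀ x, 1 ≤ W x)
    (g₀ : ℝ → ℝ) (hg₀m : Measurable g₀) (hg₀1 : ∀ᵐ x ∂ρ, |g₀ x| = 1)
    -- membership of ν in S :
    (hWfin : (∫⁻ x, W x * ENNReal.ofReal |g₀ x| ∂ρ) ≤ 1)
    (hmom : ∀ n : ℕ, Integrable (fun x => |x| ^ n * |g₀ x|) ρ)
    (hann : ∀ n : ℕ, ∫ x, x ^ n * g₀ x ∂ρ = 0)
    -- extremity of ν in S :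
    (hextreme : ∀ g₁ g₂ : ℝ → ℝ, Measurable g₁ → Measurable g₂ →
      ((∫⁻ x, W x * ENNReal.ofReal |g₁ x| ∂ρ) ≤ 1) →
      ((∫⁻ x, W x * ENNReal.ofReal |g₂ x| ∂ρ) ≤ 1) →
      (∀ n : ℕ, Integrable (fun x => |x| ^ n * |g₁ x|) ρ) →
      (∀ n : ℕ, Integrable (fun x => |x| ^ n * |g₂ x|) ρ) →
      (∀ n : ℕ, ∫ x, x ^ n * g₁ x ∂ρ = 0) →
      (∀ n : ℕ, ∫ x, x ^ n * g₂ x ∂ρ = 0) →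
      ∀ α : ℝ, 0 < α → α < 1 →
        (∀ᵐ x ∂ρ, g₀ x = α * g₁ x + (1 - α) * g₂ x) → g₁ =ᵐ[ρ] g₂) :
    ∀ h : ℝ → ℝ, Measurable h → (∃ M : ℝ, ∀ᵐ x ∂ρ, |h x| ≤ M) →
      (∀ n : ℕ, ∫ x, x ^ n * h x * g₀ x ∂ρ = 0) →
      ∃ c : ℝ, ∀ᵐ x ∂ρ, h x = c := by
  intro h hm ⟨M, hM⟩ hannh
  set L : ℝ := 2 * (|M| + 1)
  have hL : 0 < L := by positivity
  have hp : ∀ᵐ x ∂ρ, L⁻¹ * h x + 1 / 2 ∈ Set.Ioo 0 1 := by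
    filter_upwards [hM] with x hx
    have hhalf : |L⁻¹ * h x| < 1 / 2 := by
      rw [abs_mul, abs_inv, abs_of_pos hL, inv_mul_lt_iff₀ hL]
      linarith [le_abs_self M]
    constructor <;> linarith [abs_lt.mp hhalf]
  have hpann : AnnihilatesPolynomials ρ (fun x => (L⁻¹ * h x + 1 / 2) * g₀ x) :=
    AnnihilatesPolynomials.affine_mul hann (fun n => by simpa only [mul_assoc] using hannh n)
      hmom hg₀m.aestronglyMeasurable hm.aestronglyMeasurable hM _ _
  obtain ⟨c, hc⟩ := ae_eq_const_of_isExtreme hρ hW1 ⟨hg₀m, hWfin, hmom, hann⟩ hg₀1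
    (fun g₁ g₂ h₁ h₂ => hextreme g₁ g₂ h₁.1 h₂.1 h₁.2.1 h₂.2.1 h₁.2.2.1 h₂.2.2.1 h₁.2.2.2 h₂.2.2.2)
    ((hm.const_mul _).add_const _) hp hpann
  refine ⟨L * (c - 1 / 2), ?_⟩
  filter_upwards [hc] with x hx
  rw [← hx]
  field_simp
  ring

/-- Let `ν = g₀ dρ` (with `|g₀| = 1` a.e., `ρ = |ν|` finite nonzero) be a real
measure annihilating polynomials which is an extreme point of the set `S` of real measures
`σ = g dρ` with `∫ W d|σ| ≤ 1`, `supp σ ⊆ supp ν` and `σ ⊥ 𝒫`.  Then every real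
`h ∈ L^∞(|ν|)` with `hν ⊥ 𝒫` is a.e. constant. -/
theorem extreme_annihilating_measure_deficiency_one
    (ρ : Measure ℝ) [IsFiniteMeasure ρ] (hρ : ρ ≠ 0)
    (W : ℝ → ℝ≥0∞) (hWlsc : LowerSemicontinuous W) (hW1 : ∀ x, 1 ≤ W x)
    (hWgrow : ∀ n : ℕ,
      Tendsto (fun x : ℝ => ENNReal.ofReal (|x| ^ n) / W x) (atBot ⊔ atTop) (𝓝 0))
    (g₀ : ℝ → ℝ) (hg₀m : Measurable g₀) (hg₀1 : ∀ᵐ x ∂ρ, |g₀ x| = 1)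
    -- membership of ν in S :
    (hWfin : (∫⁻ x, W x * ENNReal.ofReal |g₀ x| ∂ρ) ≤ 1)
    (hmom : ∀ n : ℕ, Integrable (fun x => |x| ^ n * |g₀ x|) ρ)
    (hann : ∀ n : ℕ, ∫ x, x ^ n * g₀ x ∂ρ = 0)
    -- extremity of ν in S :
    (hextreme : ∀ g₁ g₂ : ℝ → ℝ, Measurable g₁ → Measurable g₂ →
      ((∫⁻ x, W x * ENNReal.ofReal |g₁ x| ∂ρ) ≤ 1) →
      ((∫⁻ x, W x * ENNReal.ofReal |g₂ x| ∂ρ) ≤ 1) →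
      (∀ n : ℕ, Integrable (fun x => |x| ^ n * |g₁ x|) ρ) →
      (∀ n : ℕ, Integrable (fun x => |x| ^ n * |g₂ x|) ρ) →
      (∀ n : ℕ, ∫ x, x ^ n * g₁ x ∂ρ = 0) →
      (∀ n : ℕ, ∫ x, x ^ n * g₂ x ∂ρ = 0) →
      ∀ α : ℝ, 0 < α → α < 1 →
        (∀ᵐ x ∂ρ, g₀ x = α * g₁ x + (1 - α) * g₂ x) → g₁ =ᵐ[ρ] g₂) :
    ∀ h : ℝ → ℝ, Measurable h → (∃ M : ℝ, ∀ᵐ x ∂ρ, |h x| ≤ M) →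
      (∀ n : ℕ, ∫ x, x ^ n * h x * g₀ x ∂ρ = 0) →
      ∃ c : ℝ, ∀ᵐ x ∂ρ, h x = c :=
  extreme_annihilating_measure_deficiency_one_general ρ hρ W hW1 g₀ hg₀m hg₀1 hWfin hmom hann
    hextreme
end

section
/- (Main theorem, sufficiency direction) Let W be a weight. If there exists a balanced sequence Λ = {λ_n} of zero density whose characteristic sequence P = {p_n} satisfies Σ_n W(λ_n) exp(p_n) < ∞, then polynomials are not dense in C_W. -/
/-!
If polynomials were dense, pair them with the nodal weights `wᵢ = ∏_{j ≠ i} (λᵢ - λⱼ)⁻¹` of a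
finite window `F = (-a, b)` of indices: these annihilate every polynomial of degree `< #F - 1`
(they compute the top coefficient of the Lagrange interpolant), and `|wᵢ|` is `exp pᵢ^F` up to a
factor independent of `i`, where `pᵢ^F` is the characteristic sequence truncated to `F`. Tested on
a bump that is `1` at `λ₀` and `0` at the other nodes, this gives
`exp p₀^F ≤ ε · Σ_F exp pᵢ^F W(λᵢ)` whenever the bump is `ε`-close to a polynomial in `C_W`.

Comparing term by term, `pᵢ - pᵢ^F ≥ λᵢ T` where `T = Σ_{k ∉ F} 1/λₖ` (principal value), and
`p₀ - p₀^F ≤ λ₀ T + O(Σ 1/λₖ²)`, the last sum being finite by zero density. Balancing makes `T`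
finite, and moving the ends of the window one index at a time makes `0 < T ≤ 1/|λ_{1-a}|`. Then
`pᵢ^F ≤ pᵢ + 1` on the window and `p₀^F` is bounded below independently of `F`, so the right-hand
side is at most `ε e Σ W(λₙ) exp pₙ`, which is absurd for small `ε`.
-/

open MeasureTheory Filter Topology
open scoped ENNReal

open Polynomial Lagrange Finset

theorem sum_eval_mul_nodalWeight_eq_zero {K ι : Type*} [Field K] [DecidableEq ι] {s : Finset ι}
    {v : ι → K} (hvs : Set.InjOn v s) {f : K[X]} (hdeg : f.natDegree + 1 < #s) :
    ∑ i ∈ s, f.eval (v i) * nodalWeight s v i = 0 := by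
  have hlt : f.degree < #s := degree_le_natDegree.trans_lt (by exact_mod_cast (by omega))
  have h := coeff_eq_sum hvs hlt
  rw [coeff_eq_zero_of_natDegree_lt (by omega)] at h
  simpa [nodalWeight, div_eq_mul_inv, prod_inv_distrib] using h.symm

theorem abs_nodalWeight {K ι : Type*} [Field K] [LinearOrder K] [IsStrictOrderedRing K]
    [DecidableEq ι] (s : Finset ι) (v : ι → K) (i : ι) :
    |nodalWeight s v i| = ∏ j ∈ s.erase i, |v i - v j|⁻¹ := by
  simp [nodalWeight, abs_prod]

-- `charKernel λₖ λₙ` is the `k`-th term of the principal-value sum defining `pₙ`, and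
-- `charSeqOn λ F n` is `pₙ` with that sum truncated to `k ∈ F`.
noncomputable def charKernel (t s : ℝ) : ℝ := Real.log ((1 + t ^ 2) / (t - s) ^ 2)

noncomputable def charSeqOn {ι : Type*} [DecidableEq ι] (lam : ι → ℝ) (F : Finset ι) (n : ι) : ℝ :=
  (Real.log (1 + lam n ^ 2) + ∑ k ∈ F.erase n, charKernel (lam k) (lam n)) / 2

theorem exp_charSeqOn {ι : Type*} [DecidableEq ι] {lam : ι → ℝ} {F : Finset ι}
    (hinj : Set.InjOn lam F) {n : ι} (hn : n ∈ F) :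
    Real.exp (charSeqOn lam F n) = |(∏ j ∈ F, √(1 + lam j ^ 2)) * nodalWeight F lam n| := by
  have hpos : ∀ j, 0 < 1 + lam j ^ 2 := fun j => by positivity
  have hfactor : ∀ j ∈ F.erase n,
      Real.exp (charKernel (lam j) (lam n) / 2) = √(1 + lam j ^ 2) * |lam n - lam j|⁻¹ := by
    intro j hj
    have hne : lam j - lam n ≠ 0 :=
      sub_ne_zero.2 fun h => (mem_erase.1 hj).1 (hinj (mem_of_mem_erase hj) hn h)
    rw [charKernel, Real.exp_half, Real.exp_log (by positivity), Real.sqrt_div (hpos j).le,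
      Real.sqrt_sq_eq_abs, abs_sub_comm, div_eq_mul_inv]
  rw [charSeqOn, add_div, Real.exp_add, sum_div, Real.exp_sum, prod_congr rfl hfactor,
    Real.exp_half, Real.exp_log (hpos n), abs_mul, abs_nodalWeight, prod_mul_distrib, ← mul_assoc,
    mul_prod_erase F (fun j => √(1 + lam j ^ 2)) hn, abs_of_nonneg (by positivity)]

-- junk value: `(t - t) ^ 2 = 0`, `x / 0 = 0` and `log 0 = 0`
theorem charKernel_self (t : ℝ) : charKernel t t = 0 := by
  simp [charKernel]

theorem charKernel_eq {t s : ℝ} (ht : t ≠ 0) (hst : s ≠ t) :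
    charKernel t s = Real.log (1 + (t⁻¹) ^ 2) - 2 * Real.log (1 - s * t⁻¹) := by
  have h1 : 1 - s * t⁻¹ ≠ 0 := by
    rw [sub_ne_zero, ne_comm, ← div_eq_mul_inv, ne_eq, div_eq_one_iff_eq ht]; exact hst
  have h : (1 + t ^ 2) / (t - s) ^ 2 = (1 + (t⁻¹) ^ 2) / (1 - s * t⁻¹) ^ 2 := by
    field_simp
    ring
  rw [charKernel, h, Real.log_div (by positivity) (by positivity), Real.log_pow]
  push_cast
  ring

theorem two_mul_mul_inv_le_charKernel {t s : ℝ} (ht : t ≠ 0) (h : s * t⁻¹ < 1) :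
    2 * (s * t⁻¹) ≤ charKernel t s := by
  have hst : s ≠ t := by rintro rfl; simp [ht] at h
  rw [charKernel_eq ht hst]
  have h1 : 0 ≤ Real.log (1 + (t⁻¹) ^ 2) := Real.log_nonneg (by nlinarith [sq_nonneg t⁻¹])
  have h2 := Real.log_le_sub_one_of_pos (sub_pos.2 h)
  linarith

theorem charKernel_sub_two_mul_mul_inv_le {t s : ℝ} (ht : t ≠ 0) (h : |s * t⁻¹| ≤ 1 / 2) :
    charKernel t s - 2 * (s * t⁻¹) ≤ (1 + 4 * s ^ 2) * (t⁻¹) ^ 2 := by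
  set y := s * t⁻¹
  obtain ⟨hy₁, hy₂⟩ := abs_le.1 h
  have hst : s ≠ t := by rintro rfl; simp [y, ht] at hy₂; norm_num at hy₂
  rw [charKernel_eq ht hst]
  have h1 : Real.log (1 + (t⁻¹) ^ 2) ≤ (t⁻¹) ^ 2 := by
    linarith [Real.log_le_sub_one_of_pos (by positivity : (0 : ℝ) < 1 + (t⁻¹) ^ 2)]
  -- `log z ≥ 1 - 1/z` at `z = 1 - y` gives `-log (1 - y) ≤ y + y² / (1 - y) ≤ y + 2y²`
  have h2 : -(y + 2 * y ^ 2) ≤ Real.log (1 - y) := by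
    have hy : 0 < 1 - y := by linarith
    have h3 := Real.one_sub_inv_le_log_of_pos hy
    have h4 : -(y + 2 * y ^ 2) ≤ 1 - (1 - y)⁻¹ := by
      rw [← sub_nonneg]
      have : 1 - (1 - y)⁻¹ - -(y + 2 * y ^ 2) = y ^ 2 * (1 - 2 * y) / (1 - y) := by
        field_simp [hy.ne']
        ring
      rw [this]
      apply div_nonneg (mul_nonneg (sq_nonneg y) (by linarith)) (by linarith)
    linarith
  have h5 : y ^ 2 = s ^ 2 * (t⁻¹) ^ 2 := by ring
  nlinarith

theorem tendsto_Ioo_sub_add_atTop (n : ℤ) :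
    Tendsto (fun N : ℕ => Ioo (n - N) (n + N)) atTop atTop :=
  tendsto_atTop_finset_of_monotone
    (fun _ _ h => Ioo_subset_Ioo (by omega) (by omega))
    (fun k => ⟨(k - n).natAbs + 1, by simp only [mem_Ioo]; omega⟩)

theorem tendsto_sum_sdiff {ι E : Type*} [DecidableEq ι] [AddCommGroup E] [TopologicalSpace E]
    [ContinuousSub E] {s : ℕ → Finset ι} (hs : Tendsto s atTop atTop) {g : ι → E} {A : E}
    (hg : Tendsto (fun N => ∑ k ∈ s N, g k) atTop (𝓝 A)) (F : Finset ι) :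
    Tendsto (fun N => ∑ k ∈ s N \ F, g k) atTop (𝓝 (A - ∑ k ∈ F, g k)) :=
  (hg.sub_const _).congr' <| (hs.eventually (eventually_ge_atTop F)).mono
    fun _ hF => (sum_sdiff_eq_sub hF).symm

theorem sum_Ioo_add_one_add {M : Type*} [AddCommMonoid M] (u : ℤ → M) (n : ℤ) {N : ℤ}
    (hN : 1 ≤ N) :
    ∑ k ∈ Ioo (n + 1 - N) (n + 1 + N), u k + u (n + 1 - N)
      = ∑ k ∈ Ioo (n - N) (n + N), u k + u (n + N) := by
  have h : insert (n + 1 - N) (Ioo (n + 1 - N) (n + 1 + N))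
      = insert (n + N) (Ioo (n - N) (n + N)) := by
    ext k; simp only [mem_insert, mem_Ioo]; omega
  rw [add_comm, ← sum_insert (by simp), h, sum_insert (by simp), add_comm]

theorem tendsto_sum_Ioo_sub_add {E : Type*} [AddCommGroup E] [TopologicalSpace E]
    [IsTopologicalAddGroup E] {u : ℤ → E} (hu : Tendsto u cofinite (𝓝 0)) {L : E}
    (hL : Tendsto (fun N : ℕ => ∑ k ∈ Ioo (-(N : ℤ)) N, u k) atTop (𝓝 L)) (n : ℤ) :
    Tendsto (fun N : ℕ => ∑ k ∈ Ioo (n - N) (n + N), u k) atTop (𝓝 L) := by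
  have hnull : ∀ c : ℤ, Tendsto (fun N : ℕ => u (c + N) - u (c + 1 - N)) atTop (𝓝 0) := by
    intro c
    have h : ∀ f : ℕ → ℤ, f.Injective → Tendsto (fun N => u (f N)) atTop (𝓝 0) := fun f hf =>
      hu.comp (Nat.cofinite_eq_atTop ▸ hf.tendsto_cofinite)
    simpa using (h _ ((add_right_injective c).comp Nat.cast_injective)).sub
      (h _ ((sub_right_injective (b := c + 1)).comp Nat.cast_injective))
  have hstep : ∀ c : ℤ, ∀ᶠ N : ℕ in atTop, ∑ k ∈ Ioo (c + 1 - N) (c + 1 + N), u k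
      = ∑ k ∈ Ioo (c - N) (c + N), u k + (u (c + N) - u (c + 1 - N)) := fun c =>
    (eventually_ge_atTop 1).mono fun N hN => by
      rw [add_sub, eq_sub_iff_add_eq, sum_Ioo_add_one_add u c (by exact_mod_cast hN)]
  induction n using Int.induction_on with
  | zero => simpa using hL
  | succ i ih =>
    simpa using (ih.add (hnull i)).congr' ((hstep i).mono fun _ h => h.symm)
  | pred i ih =>
    refine (sub_zero L ▸ ih.sub (hnull (-i - 1))).congr' ((hstep (-i - 1)).mono fun N h => ?_)
    simp only [sub_add_cancel] at h ⊢
    rw [h, add_sub_cancel_right]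

theorem tendsto_sum_sdiff_charKernel_sub {lam : ℤ → ℝ} {L' S : ℝ} {n : ℤ}
    (hx0 : Tendsto (fun k => (lam k)⁻¹) cofinite (𝓝 0))
    (hL' : Tendsto (fun N : ℕ => ∑ k ∈ Ioo (-(N : ℤ)) N, (lam k)⁻¹) atTop (𝓝 L'))
    (hS : Tendsto (fun N : ℕ => ∑ k ∈ (Ioo (n - N) (n + N)).erase n, charKernel (lam k) (lam n))
      atTop (𝓝 S)) (F : Finset ℤ) :
    Tendsto (fun N : ℕ => ∑ k ∈ Ioo (n - N) (n + N) \ F,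
        (charKernel (lam k) (lam n) - 2 * (lam n * (lam k)⁻¹))) atTop
      (𝓝 (S - ∑ k ∈ F.erase n, charKernel (lam k) (lam n)
        - 2 * lam n * (L' - ∑ k ∈ F, (lam k)⁻¹))) := by
  have hself : charKernel (lam n) (lam n) = 0 := charKernel_self _
  have hS' : Tendsto (fun N : ℕ => ∑ k ∈ Ioo (n - N) (n + N), charKernel (lam k) (lam n))
      atTop (𝓝 S) := hS.congr fun N => sum_erase _ hself
  have hker := tendsto_sum_sdiff (tendsto_Ioo_sub_add_atTop n) hS' F
  have hinv := tendsto_sum_sdiff (tendsto_Ioo_sub_add_atTop n) (tendsto_sum_Ioo_sub_add hx0 hL' n) F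
  rw [← sum_erase F hself] at hker
  refine (hker.sub (hinv.const_mul (2 * lam n))).congr fun N => ?_
  simp only [sum_sub_distrib, mul_sum, mul_assoc]

theorem two_mul_mul_le_sub_sum_charKernel {lam : ℤ → ℝ} {L' S : ℝ} {n : ℤ}
    (hx0 : Tendsto (fun k => (lam k)⁻¹) cofinite (𝓝 0))
    (hL' : Tendsto (fun N : ℕ => ∑ k ∈ Ioo (-(N : ℤ)) N, (lam k)⁻¹) atTop (𝓝 L'))
    (hS : Tendsto (fun N : ℕ => ∑ k ∈ (Ioo (n - N) (n + N)).erase n, charKernel (lam k) (lam n))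
      atTop (𝓝 S)) {F : Finset ℤ} (hF : ∀ k ∉ F, lam k ≠ 0 ∧ lam n * (lam k)⁻¹ < 1) :
    2 * lam n * (L' - ∑ k ∈ F, (lam k)⁻¹) ≤ S - ∑ k ∈ F.erase n, charKernel (lam k) (lam n) := by
  have h := ge_of_tendsto' (tendsto_sum_sdiff_charKernel_sub hx0 hL' hS F) fun N =>
    sum_nonneg fun k hk => sub_nonneg.2 <|
      two_mul_mul_inv_le_charKernel (hF k (mem_sdiff.1 hk).2).1 (hF k (mem_sdiff.1 hk).2).2
  linarith

theorem sub_sum_charKernel_le {lam : ℤ → ℝ} {L' S : ℝ} {n : ℤ}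
    (hx0 : Tendsto (fun k => (lam k)⁻¹) cofinite (𝓝 0))
    (hL' : Tendsto (fun N : ℕ => ∑ k ∈ Ioo (-(N : ℤ)) N, (lam k)⁻¹) atTop (𝓝 L'))
    (hS : Tendsto (fun N : ℕ => ∑ k ∈ (Ioo (n - N) (n + N)).erase n, charKernel (lam k) (lam n))
      atTop (𝓝 S)) (hsq : Summable fun k => ((lam k)⁻¹) ^ 2) {F : Finset ℤ}
    (hF : ∀ k ∉ F, lam k ≠ 0 ∧ |lam n * (lam k)⁻¹| ≤ 1 / 2) :
    S - ∑ k ∈ F.erase n, charKernel (lam k) (lam n)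
      ≤ 2 * lam n * (L' - ∑ k ∈ F, (lam k)⁻¹) + (1 + 4 * lam n ^ 2) * ∑' k, ((lam k)⁻¹) ^ 2 := by
  have h := le_of_tendsto' (tendsto_sum_sdiff_charKernel_sub hx0 hL' hS F) fun N =>
    calc _ ≤ ∑ k ∈ Ioo (n - N) (n + N) \ F, (1 + 4 * lam n ^ 2) * ((lam k)⁻¹) ^ 2 :=
          sum_le_sum fun k hk => charKernel_sub_two_mul_mul_inv_le
            (hF k (mem_sdiff.1 hk).2).1 (hF k (mem_sdiff.1 hk).2).2
      _ ≤ (1 + 4 * lam n ^ 2) * ∑' k, ((lam k)⁻¹) ^ 2 := by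
          rw [← mul_sum]
          exact mul_le_mul_of_nonneg_left (hsq.sum_le_tsum _ fun k _ => sq_nonneg _)
            (by positivity)
  linarith

theorem tendsto_cofinite_cocompact_of_atBot_atTop {lam : ℤ → ℝ} (htop : Tendsto lam atTop atTop)
    (hbot : Tendsto lam atBot atBot) : Tendsto lam cofinite (cocompact ℝ) := by
  rw [Int.cofinite_eq, cocompact_eq_atBot_atTop]
  exact (hbot.mono_right le_sup_left).sup (htop.mono_right le_sup_right)

theorem card_Icc_le_ncard_range_inter_Ioo {lam : ℤ → ℝ} (hmono : StrictMono lam)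
    (hcoc : Tendsto lam cofinite (cocompact ℝ)) {A : ℝ} {m M : ℤ} (hm : -A < lam m)
    (hM : lam M < A) : #(Icc m M) ≤ (Set.range lam ∩ Set.Ioo (-A) A).ncard := by
  have hfin : (Set.range lam ∩ Set.Ioo (-A) A).Finite := by
    have hpre := tendsto_cofinite_cocompact_iff.1 hcoc _ (isCompact_Icc (a := -A) (b := A))
    refine (hpre.image lam).subset ?_
    rintro _ ⟨⟨k, rfl⟩, hk⟩
    exact ⟨k, Set.Ioo_subset_Icc_self hk, rfl⟩
  rw [← card_image_of_injective _ hmono.injective, ← Set.ncard_coe_finset]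
  refine Set.ncard_le_ncard ?_ hfin
  simp only [coe_image, coe_Icc]
  rintro _ ⟨k, hk, rfl⟩
  exact ⟨⟨k, rfl⟩, hm.trans_le (hmono.monotone hk.1), (hmono.monotone hk.2).trans_lt hM⟩

theorem eventually_abs_le_abs_of_density_zero {lam : ℤ → ℝ} (hmono : StrictMono lam)
    (hcoc : Tendsto lam cofinite (cocompact ℝ)) (hneg : lam (-1) < 0) (hpos : 0 ≤ lam 0)
    (hdens : Tendsto (fun A : ℝ => ((Set.range lam ∩ Set.Ioo (-A) A).ncard : ℝ) / (2 * A))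
      atTop (𝓝 0)) :
    ∀ᶠ k : ℤ in cofinite, |(k : ℝ)| ≤ |lam k| := by
  obtain ⟨A₀, hA₀⟩ := eventually_atTop.1 (hdens.eventually (gt_mem_nhds one_half_pos))
  have habs : Tendsto (fun k : ℤ => |(k : ℝ)|) cofinite atTop := by
    refine (cocompact_eq_cofinite ℤ ▸ tendsto_norm_cocompact_atTop).congr fun k => ?_
    exact Int.norm_eq_abs k
  filter_upwards [habs.eventually_ge_atTop (max A₀ 1)] with k hk
  by_contra! hlt
  have hk1 : (1 : ℝ) ≤ |(k : ℝ)| := le_of_max_le_right hk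
  have hcount : |(k : ℝ)| ≤ (Set.range lam ∩ Set.Ioo (-|(k : ℝ)|) |(k : ℝ)|).ncard := by
    have hcard : ∀ m M : ℤ, |k| ≤ #(Icc m M) → -|(k : ℝ)| < lam m → lam M < |(k : ℝ)| →
        |(k : ℝ)| ≤ (Set.range lam ∩ Set.Ioo (-|(k : ℝ)|) |(k : ℝ)|).ncard := fun m M hc hm hM =>
      calc |(k : ℝ)| = ((|k| : ℤ) : ℝ) := Int.cast_abs.symm
        _ ≤ _ := by
          exact_mod_cast hc.trans
            (by exact_mod_cast card_Icc_le_ncard_range_inter_Ioo hmono hcoc hm hM)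
    have h1 : 0 < lam 1 := hpos.trans_lt (hmono zero_lt_one)
    have h2 := neg_abs_le (lam k)
    have h3 := le_abs_self (lam k)
    rcases le_or_gt 0 k with hk0 | hk0
    · exact hcard 1 k (by rw [Int.card_Icc, abs_of_nonneg hk0]; omega) (by linarith) (by linarith)
    · exact hcard k (-1) (by rw [Int.card_Icc, abs_of_neg hk0]; omega) (by linarith) (by linarith)
  have := hA₀ |(k : ℝ)| (le_of_max_le_left hk)
  rw [div_lt_iff₀ (by positivity)] at this
  linarith

theorem summable_inv_sq_of_eventually_abs_le {f : ℤ → ℝ}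
    (h : ∀ᶠ k : ℤ in cofinite, |(k : ℝ)| ≤ |f k|) : Summable fun k => (f k)⁻¹ ^ 2 := by
  refine Summable.of_norm_bounded_eventually (Real.summable_one_div_int_pow.2 one_lt_two) ?_
  filter_upwards [h, (Set.finite_singleton (0 : ℤ)).eventually_cofinite_notMem] with k hk hk0
  have hk0' : (k : ℝ) ≠ 0 := Int.cast_ne_zero.2 hk0
  rw [Real.norm_eq_abs, abs_pow, abs_inv, inv_pow, ← one_div, sq_abs]
  exact one_div_le_one_div_of_le (by positivity) (sq_le_sq.2 (by simpa using hk))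

theorem abs_inv_div_one_add_sq_le (t : ℝ) : |t⁻¹ / (1 + t ^ 2)| ≤ t⁻¹ ^ 2 := by
  rcases eq_or_ne t 0 with rfl | ht
  · simp
  rw [abs_div, abs_of_pos (a := 1 + t ^ 2) (by positivity), div_le_iff₀ (by positivity)]
  have h : t⁻¹ ^ 2 * (1 + t ^ 2) = t⁻¹ ^ 2 + 1 := by field_simp
  rw [h, ← sq_abs t⁻¹]
  nlinarith [sq_nonneg (|t⁻¹| - 1)]

theorem exists_tendsto_sum_Ioo_inv {f : ℤ → ℝ} {L : ℝ}
    (hbal : Tendsto (fun N : ℕ => ∑ k ∈ Ioo (-(N : ℤ)) N, f k / (1 + f k ^ 2)) atTop (𝓝 L))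
    (hsq : Summable fun k => (f k)⁻¹ ^ 2) :
    ∃ L', Tendsto (fun N : ℕ => ∑ k ∈ Ioo (-(N : ℤ)) N, (f k)⁻¹) atTop (𝓝 L') := by
  have hcorr : Summable fun k => (f k)⁻¹ / (1 + f k ^ 2) :=
    hsq.of_norm_bounded fun k => abs_inv_div_one_add_sq_le (f k)
  refine ⟨_, (hbal.add (hcorr.hasSum.comp (by simpa using tendsto_Ioo_sub_add_atTop 0))).congr
    fun N => ?_⟩
  simp only [Function.comp_apply, ← sum_add_distrib]
  refine sum_congr rfl fun k _ => ?_
  rcases eq_or_ne (f k) 0 with h | h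
  · simp [h]
  · field_simp
    ring

theorem exists_ge_and_not_add_one (P : ℤ → Prop) {m M : ℤ} (hmM : m ≤ M) (hm : P m)
    (hM : ¬P M) : ∃ a, m ≤ a ∧ P a ∧ ¬P (a + 1) := by
  by_contra! h
  exact hM (Int.leInduction hm (fun a ha hPa => h a ha hPa) M hmM)

theorem sum_Ioo_neg_add_one {M : Type*} [AddCommMonoid M] (x : ℤ → M) {a b : ℤ} (h : -a < b) :
    ∑ k ∈ Ioo (-(a + 1)) b, x k = x (-a) + ∑ k ∈ Ioo (-a) b, x k := by
  rw [show Ioo (-(a + 1)) b = insert (-a) (Ioo (-a) b) by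
      ext k; simp only [mem_insert, mem_Ioo]; omega,
    sum_insert (by simp)]

theorem sum_Ioo_add_one {M : Type*} [AddCommMonoid M] (x : ℤ → M) {a b : ℤ} (h : a < b) :
    ∑ k ∈ Ioo a (b + 1), x k = x b + ∑ k ∈ Ioo a b, x k := by
  rw [show Ioo a (b + 1) = insert b (Ioo a b) by ext k; simp only [mem_insert, mem_Ioo]; omega,
    sum_insert (by simp)]

theorem sum_Ioo_le_sum_Ioo_of_le_left {x : ℤ → ℝ} (hneg : ∀ k < 0, x k ≤ 0) {a a' b : ℤ}
    (ha : 1 ≤ a) (h : a ≤ a') : ∑ k ∈ Ioo (-a') b, x k ≤ ∑ k ∈ Ioo (-a) b, x k := by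
  have := sum_le_sum_of_subset_of_nonneg (f := fun k => -x k)
    (Ioo_subset_Ioo_left (neg_le_neg h) : Ioo (-a) b ⊆ Ioo (-a') b)
    fun k hk hk' => neg_nonneg.2 (hneg k (by simp only [mem_Ioo] at hk hk'; omega))
  simpa only [sum_neg_distrib, neg_le_neg_iff] using this

theorem sum_Ioo_le_sum_Ioo_of_le_right {x : ℤ → ℝ} (hpos : ∀ k > 0, 0 ≤ x k) {a b b' : ℤ}
    (hb : 1 ≤ b) (h : b ≤ b') : ∑ k ∈ Ioo (-a) b, x k ≤ ∑ k ∈ Ioo (-a) b', x k :=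
  sum_le_sum_of_subset_of_nonneg (Ioo_subset_Ioo_right h)
    fun k hk hk' => hpos k (by simp only [mem_Ioo] at hk hk'; omega)

/-- Moving the left end out by one index raises the tail by `-x (-a)`; the window is taken where
the tail first becomes positive. -/
theorem exists_sub_sum_Ioo_mem_Ioc {x : ℤ → ℝ} {L : ℝ} (hneg : ∀ k < 0, x k < 0)
    (hpos : ∀ k > 0, 0 < x k) (hx : Tendsto x atBot (𝓝 0))
    (hL : Tendsto (fun N : ℕ => ∑ k ∈ Ioo (-(N : ℤ)) N, x k) atTop (𝓝 L)) {J : ℤ} (hJ : 2 ≤ J) :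
    ∃ a b : ℤ, J ≤ a ∧ J ≤ b ∧ L - ∑ k ∈ Ioo (-a) b, x k ∈ Set.Ioc 0 (-x (1 - a)) := by
  set T : ℤ → ℤ → ℝ := fun a b => L - ∑ k ∈ Ioo (-a) b, x k with hT
  have hdiag : Tendsto (fun N : ℕ => T N N) atTop (𝓝 0) := by simpa [hT] using hL.const_sub L
  have hneg' : ∀ k < 0, x k ≤ 0 := fun k hk => (hneg k hk).le
  have hpos' : ∀ k > 0, 0 ≤ x k := fun k hk => (hpos k hk).le
  obtain ⟨N, hNJ, hN⟩ := ((tendsto_natCast_atTop_atTop.eventually_ge_atTop (J + 1)).and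
    (hdiag.eventually (gt_mem_nhds (neg_pos.2 (hneg (-J) (by omega)))))).exists
  set b : ℤ := (N : ℤ)
  have hb : T J b < 0 := by
    have h1 := sum_Ioo_neg_add_one x (a := J) (b := b) (by omega)
    have h2 := sum_Ioo_le_sum_Ioo_of_le_left hneg' (b := b) (by omega : 1 ≤ J + 1) hNJ
    simp only [hT] at hN ⊢
    linarith
  have hxb : 0 < x b := hpos b (by omega)
  have hx' : Tendsto (fun M : ℕ => x (1 - M)) atTop (𝓝 0) :=
    hx.comp (tendsto_atBot_add_const_left _ 1
      (tendsto_neg_atTop_atBot.comp tendsto_natCast_atTop_atTop))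
  obtain ⟨M, hMb, hM1, hM2⟩ := ((tendsto_natCast_atTop_atTop.eventually_ge_atTop (b + 1)).and
    ((hdiag.eventually (lt_mem_nhds (by linarith : -(x b / 2) < 0))).and
      (hx'.eventually (lt_mem_nhds (by linarith : -(x b / 2) < 0))))).exists
  have hTM : -x (1 - M) < T M b := by
    have h1 := sum_Ioo_add_one x (a := -M) (b := b) (by omega)
    have h2 := sum_Ioo_le_sum_Ioo_of_le_right hpos' (a := M) (by omega : 1 ≤ b + 1) hMb
    simp only [hT] at hM1 ⊢
    linarith
  obtain ⟨a, hJa, hPa, hPa1⟩ := exists_ge_and_not_add_one (fun a => T a b ≤ -x (1 - a))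
    (by omega : J ≤ M) (hb.le.trans (neg_nonneg.2 (hneg' _ (by omega)))) (not_le.2 hTM)
  refine ⟨a, b, hJa, by omega, ?_, hPa⟩
  have h1 := sum_Ioo_neg_add_one x (a := a) (b := b) (by omega)
  simp only [hT, show 1 - (a + 1) = -a by ring, not_le] at hPa1
  linarith

theorem memCW_of_hasCompactSupport (W : ℝ → ℝ≥0∞) {f : ℝ → ℝ} (hf : Continuous f)
    (hfs : HasCompactSupport f) : MemCW W f := by
  refine ⟨hf, tendsto_const_nhds.congr' ?_⟩
  rw [← cocompact_eq_atBot_atTop]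
  filter_upwards [hfs.isCompact.compl_mem_cocompact] with y hy
  simp [image_eq_zero_of_notMem_tsupport hy]

theorem exists_memCW_eq_one_of_le_abs_sub (W : ℝ → ℝ≥0∞) (y₀ : ℝ) {δ : ℝ} (hδ : 0 < δ) :
    ∃ f : ℝ → ℝ, MemCW W f ∧ f y₀ = 1 ∧ ∀ y, δ ≤ |y - y₀| → f y = 0 := by
  set f : ℝ → ℝ := fun y => max 0 (1 - |y - y₀| / δ)
  have hzero : ∀ y, δ ≤ |y - y₀| → f y = 0 := fun y hy =>
    max_eq_left (sub_nonpos.2 ((one_le_div hδ).2 hy))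
  refine ⟨f, memCW_of_hasCompactSupport W (by fun_prop) ?_, by simp [f], hzero⟩
  refine HasCompactSupport.intro (isCompact_Icc (a := y₀ - δ) (b := y₀ + δ)) fun y hy => hzero y ?_
  rw [Set.mem_Icc, not_and_or, not_le, not_le] at hy
  rcases hy with hy | hy
  · rw [abs_of_neg (by linarith)]; linarith
  · rw [abs_of_pos (by linarith)]; linarith

theorem not_polyDense_of_annihilators (W : ℝ → ℝ≥0∞) {ι : Type*} (x : ι → ℝ) (i₀ : ι) {δ : ℝ}
    (hδ : 0 < δ) (hsep : ∀ i ≠ i₀, δ ≤ |x i - x i₀|) {c : ℝ} (hc : 0 < c) {B : ℝ≥0∞}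
    (hB : B ≠ ⊤)
    (hann : ∀ d : ℕ, ∃ (F : Finset ι) (μ : ι → ℝ), i₀ ∈ F ∧ c ≤ |μ i₀| ∧
      ∑ i ∈ F, ENNReal.ofReal |μ i| * W (x i) ≤ B ∧
      ∀ s : ℝ[X], s.natDegree ≤ d → ∑ i ∈ F, μ i * s.eval (x i) = 0) :
    ¬ PolyDenseCW W := by
  intro hdense
  obtain ⟨f, hf, hf₀, hf₁⟩ := exists_memCW_eq_one_of_le_abs_sub W (x i₀) hδ
  set ε := c / (2 * (B.toReal + 1))
  have hε : 0 < ε := by positivity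
  obtain ⟨s, hs⟩ := hdense f hf ε hε
  obtain ⟨F, μ, hi₀, hcμ, hμB, hμ⟩ := hann s.natDegree
  have hpair : ∑ i ∈ F, μ i * (f (x i) - s.eval (x i)) = μ i₀ := by
    simp only [mul_sub, sum_sub_distrib, hμ s le_rfl, sub_zero]
    rw [sum_eq_single i₀ (fun i _ hi => by rw [hf₁ _ (hsep i hi), mul_zero])
      (fun h => absurd hi₀ h), hf₀, mul_one]
  have hle : ENNReal.ofReal c ≤ ENNReal.ofReal ε * B :=
    calc ENNReal.ofReal c ≤ ENNReal.ofReal |∑ i ∈ F, μ i * (f (x i) - s.eval (x i))| := by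
          rw [hpair]; exact ENNReal.ofReal_le_ofReal hcμ
      _ ≤ ∑ i ∈ F, ENNReal.ofReal |μ i| * ENNReal.ofReal |f (x i) - s.eval (x i)| := by
          simp_rw [← ENNReal.ofReal_mul (abs_nonneg _), ← abs_mul]
          rw [← ENNReal.ofReal_sum_of_nonneg fun i _ => abs_nonneg _]
          exact ENNReal.ofReal_le_ofReal (abs_sum_le_sum_abs _ _)
      _ ≤ ∑ i ∈ F, ENNReal.ofReal |μ i| * (ENNReal.ofReal ε * W (x i)) :=
          sum_le_sum fun i _ => mul_le_mul_right (hs _) _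
      _ = ENNReal.ofReal ε * ∑ i ∈ F, ENNReal.ofReal |μ i| * W (x i) := by
          rw [mul_sum]; exact sum_congr rfl fun i _ => by ring
      _ ≤ ENNReal.ofReal ε * B := mul_le_mul_right hμB _
  rw [← ENNReal.ofReal_toReal hB, ← ENNReal.ofReal_mul hε.le,
    ENNReal.ofReal_le_ofReal_iff (by positivity)] at hle
  have : ε * B.toReal < c := by
    rw [div_mul_eq_mul_div, div_lt_iff₀ (by positivity)]
    nlinarith [ENNReal.toReal_nonneg (a := B)]
  linarith

theorem eventually_forall_notMem_Ioo {P : ℤ → Prop} (h : ∀ᶠ k in cofinite, P k) :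
    ∀ᶠ J in atTop, ∀ a b : ℤ, J ≤ a → J ≤ b → ∀ k ∉ Ioo (-a) b, P k := by
  rw [Int.cofinite_eq, eventually_sup, eventually_atBot, eventually_atTop] at h
  obtain ⟨⟨m, hm⟩, ⟨M, hM⟩⟩ := h
  filter_upwards [eventually_ge_atTop (-m), eventually_ge_atTop M] with J hJm hJM a b ha hb k hk
  rw [mem_Ioo, not_and_or, not_lt, not_lt] at hk
  rcases hk with hk | hk
  · exact hm k (by omega)
  · exact hM k (by omega)

theorem mul_inv_lt_one_of_notMem_Ioo {lam : ℤ → ℝ} (hmono : StrictMono lam)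
    (hneg : lam (-1) < 0) (hpos : 0 ≤ lam 0) {a b n k : ℤ} (ha : 1 ≤ a) (hb : 1 ≤ b)
    (hn : n ∈ Ioo (-a) b) (hk : k ∉ Ioo (-a) b) : lam k ≠ 0 ∧ lam n * (lam k)⁻¹ < 1 := by
  rw [mem_Ioo] at hn hk
  rcases le_or_gt b k with hbk | hkb
  · have hk0 : 0 < lam k := hpos.trans_lt (hmono (by omega))
    exact ⟨hk0.ne', by rw [← div_eq_mul_inv, div_lt_one hk0]; exact hmono (by omega)⟩
  · have hk0 : lam k < 0 := (hmono.monotone (by omega : k ≤ -1)).trans_lt hneg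
    exact ⟨hk0.ne, by rw [← div_eq_mul_inv, div_lt_one_of_neg hk0]; exact hmono (by omega)⟩

theorem exists_Ioo_charSeqOn_bounds {lam : ℤ → ℝ} (hmono : StrictMono lam)
    (hneg : lam (-1) < 0) (hpos : 0 ≤ lam 0)
    (hx0 : Tendsto (fun k => (lam k)⁻¹) cofinite (𝓝 0))
    (hsq : Summable fun k => (lam k)⁻¹ ^ 2) {L' : ℝ}
    (hL' : Tendsto (fun N : ℕ => ∑ k ∈ Ioo (-(N : ℤ)) N, (lam k)⁻¹) atTop (𝓝 L'))
    {S : ℤ → ℝ}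
    (hS : ∀ n : ℤ, Tendsto (fun N : ℕ =>
      ∑ k ∈ (Ioo (n - N) (n + N)).erase n, charKernel (lam k) (lam n)) atTop (𝓝 (S n)))
    (d : ℕ) :
    ∃ a b : ℤ, d + 1 < #(Ioo (-a) b) ∧ (0 : ℤ) ∈ Ioo (-a) b ∧
      (∀ n ∈ Ioo (-a) b, charSeqOn lam (Ioo (-a) b) n ≤ (Real.log (1 + lam n ^ 2) + S n) / 2 + 1) ∧
      (Real.log (1 + lam 0 ^ 2) + S 0) / 2 + lam 0 * (lam (-1))⁻¹
        - (1 + 4 * lam 0 ^ 2) / 2 * ∑' k, (lam k)⁻¹ ^ 2 ≤ charSeqOn lam (Ioo (-a) b) 0 := by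
  have hsmall : ∀ᶠ k in cofinite, |lam 0 * (lam k)⁻¹| ≤ 1 / 2 := by
    have h := hx0.const_mul (lam 0)
    rw [mul_zero] at h
    exact (h.eventually (Icc_mem_nhds (by norm_num) one_half_pos)).mono fun k hk => abs_le.2 hk
  obtain ⟨J, hJ0, hJd⟩ :=
    ((eventually_forall_notMem_Ioo hsmall).and (eventually_ge_atTop ((d : ℤ) + 2))).exists
  obtain ⟨a, b, ha, hb, hT0, hT1⟩ := exists_sub_sum_Ioo_mem_Ioc (x := fun k => (lam k)⁻¹)
    (fun k hk => inv_lt_zero.2 ((hmono.monotone (by omega : k ≤ -1)).trans_lt hneg))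
    (fun k hk => inv_pos.2 (hpos.trans_lt (hmono hk)))
    (hx0.mono_left (Int.cofinite_eq ▸ le_sup_left)) hL' (by omega : 2 ≤ J)
  set T := L' - ∑ k ∈ Ioo (-a) b, (lam k)⁻¹
  have hout : ∀ {n}, n ∈ Ioo (-a) b → ∀ k ∉ Ioo (-a) b, lam k ≠ 0 ∧ lam n * (lam k)⁻¹ < 1 :=
    fun hn k hk => mul_inv_lt_one_of_notMem_Ioo hmono hneg hpos (by omega) (by omega) hn hk
  have hlast : lam (1 - a) < 0 := (hmono.monotone (by omega : 1 - a ≤ -1)).trans_lt hneg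
  have h0 : (0 : ℤ) ∈ Ioo (-a) b := by simp only [mem_Ioo]; omega
  refine ⟨a, b, by rw [Int.card_Ioo]; omega, h0, fun n hn => ?_, ?_⟩
  · have hlow := two_mul_mul_le_sub_sum_charKernel hx0 hL' (hS n) (hout hn)
    -- every node lies to the right of `λ_{1-a}`, and `λ_{1-a} T ≥ -1` by the choice of the window
    have hn' : lam (1 - a) ≤ lam n := hmono.monotone (by simp only [mem_Ioo] at hn; omega)
    have hone : lam (1 - a) * -(lam (1 - a))⁻¹ = -1 := by field_simp [hlast.ne]
    have : -1 ≤ lam n * T := by nlinarith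
    rw [charSeqOn]
    linarith
  · have hup := sub_sum_charKernel_le hx0 hL' (hS 0) hsq
      fun k hk => ⟨(hout h0 k hk).1, hJ0 a b ha hb k hk⟩
    have hT : T ≤ -(lam (-1))⁻¹ := hT1.trans <| neg_le_neg <|
      (inv_le_inv_of_neg hneg hlast).2 (hmono.monotone (by omega))
    have : lam 0 * T ≤ -(lam 0 * (lam (-1))⁻¹) := by nlinarith
    rw [charSeqOn]
    linarith

theorem exists_pos_forall_le_abs_sub {lam : ℤ → ℝ} (hmono : StrictMono lam) (i₀ : ℤ) :
    ∃ δ > 0, ∀ i ≠ i₀, δ ≤ |lam i - lam i₀| := by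
  have h₁ := hmono (lt_add_one i₀)
  have h₂ := hmono (sub_one_lt i₀)
  refine ⟨min (lam (i₀ + 1) - lam i₀) (lam i₀ - lam (i₀ - 1)), by simp [h₁, h₂], fun i hi => ?_⟩
  rcases lt_or_gt_of_ne hi with h | h
  · have := hmono.monotone (by omega : i ≤ i₀ - 1)
    rw [abs_of_neg (by linarith)]
    exact (min_le_right _ _).trans (by linarith)
  · have := hmono.monotone (by omega : i₀ + 1 ≤ i)
    rw [abs_of_pos (by linarith)]
    exact (min_le_left _ _).trans (by linarith)

theorem exists_nodalWeight_annihilator (W : ℝ → ℝ≥0∞) {lam : ℤ → ℝ} (hmono : StrictMono lam)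
    (hneg : lam (-1) < 0) (hpos : 0 ≤ lam 0)
    (hx0 : Tendsto (fun k => (lam k)⁻¹) cofinite (𝓝 0))
    (hsq : Summable fun k => (lam k)⁻¹ ^ 2) {L' : ℝ}
    (hL' : Tendsto (fun N : ℕ => ∑ k ∈ Ioo (-(N : ℤ)) N, (lam k)⁻¹) atTop (𝓝 L'))
    {p S : ℤ → ℝ}
    (hS : ∀ n : ℤ, Tendsto (fun N : ℕ =>
      ∑ k ∈ (Ioo (n - N) (n + N)).erase n, charKernel (lam k) (lam n)) atTop (𝓝 (S n)))
    (hp : ∀ n : ℤ, p n = (Real.log (1 + lam n ^ 2) + S n) / 2) (d : ℕ) :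
    ∃ (F : Finset ℤ) (μ : ℤ → ℝ), 0 ∈ F ∧
      Real.exp (p 0 + lam 0 * (lam (-1))⁻¹ - (1 + 4 * lam 0 ^ 2) / 2 * ∑' k, (lam k)⁻¹ ^ 2)
        ≤ |μ 0| ∧
      ∑ i ∈ F, ENNReal.ofReal |μ i| * W (lam i)
        ≤ ENNReal.ofReal (Real.exp 1) * ∑' n, W (lam n) * ENNReal.ofReal (Real.exp (p n)) ∧
      ∀ s : ℝ[X], s.natDegree ≤ d → ∑ i ∈ F, μ i * s.eval (lam i) = 0 := by
  obtain ⟨a, b, hcard, h0, hle, hge⟩ := exists_Ioo_charSeqOn_bounds hmono hneg hpos hx0 hsq hL' hS d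
  set F := Ioo (-a) b
  set G := ∏ j ∈ F, √(1 + lam j ^ 2)
  have hinj : Set.InjOn lam F := hmono.injective.injOn
  -- the nodal weights of a monotone sequence alternate in sign, so `μ` is the paper's
  -- `(-1)ⁿ exp pₙ` with `pₙ` truncated to the window `F`
  refine ⟨F, fun i => G * nodalWeight F lam i, h0, ?_, ?_, fun s hs => ?_⟩
  · rw [← exp_charSeqOn hinj h0, hp]
    exact Real.exp_le_exp.2 hge
  · calc _ ≤ ∑ i ∈ F, ENNReal.ofReal (Real.exp 1) * (W (lam i) * ENNReal.ofReal (Real.exp (p i))) :=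
          sum_le_sum fun i hi => by
            rw [← exp_charSeqOn hinj hi, mul_left_comm, mul_comm,
              ← ENNReal.ofReal_mul (by positivity), ← Real.exp_add, hp, add_comm 1]
            exact mul_le_mul_right (ENNReal.ofReal_le_ofReal (Real.exp_le_exp.2 (hle i hi))) _
      _ ≤ _ := by
          rw [← mul_sum]
          exact mul_le_mul_right (ENNReal.sum_le_tsum _) _
  · rw [← mul_zero G, ← sum_eval_mul_nodalWeight_eq_zero hinj (f := s) (by omega), mul_sum]
    exact sum_congr rfl fun i _ => by ring

theorem not_polyDense_of_characteristic_sum_finite_general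
    (W : ℝ → ℝ≥0∞)
    (lam : ℤ → ℝ) (hmono : StrictMono lam)
    (htop : Tendsto lam atTop atTop) (hbot : Tendsto lam atBot atBot)
    (hneg : lam (-1) < 0) (hpos : 0 ≤ lam 0)
    -- zero density
    (hdens : Tendsto (fun A : ℝ => ((Set.range lam ∩ Set.Ioo (-A) A).ncard : ℝ) / (2 * A))
      atTop (𝓝 0))
    -- balanced
    (hbal : ∃ L : ℝ, Tendsto (fun N : ℕ =>
        ∑ n ∈ Finset.Ioo (-(N : ℤ)) (N : ℤ), lam n / (1 + lam n ^ 2)) atTop (𝓝 L))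
    -- characteristic sequence
    (p S : ℤ → ℝ)
    (hS : ∀ n : ℤ, Tendsto (fun N : ℕ =>
        ∑ k ∈ (Finset.Ioo (n - (N : ℤ)) (n + (N : ℤ))).erase n,
          Real.log ((1 + lam k ^ 2) / (lam k - lam n) ^ 2)) atTop (𝓝 (S n)))
    (hp : ∀ n : ℤ, p n = (Real.log (1 + lam n ^ 2) + S n) / 2)
    -- Σ W(λₙ) exp(pₙ) < ∞
    (hsum : (∑' n : ℤ, W (lam n) * ENNReal.ofReal (Real.exp (p n))) < ⊤) :
    ¬ PolyDenseCW W := by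
  have hcoc := tendsto_cofinite_cocompact_of_atBot_atTop htop hbot
  have hx0 : Tendsto (fun k => (lam k)⁻¹) cofinite (𝓝 0) :=
    tendsto_inv₀_cobounded.comp (Metric.cobounded_eq_cocompact (α := ℝ) ▸ hcoc)
  have hsq := summable_inv_sq_of_eventually_abs_le
    (eventually_abs_le_abs_of_density_zero hmono hcoc hneg hpos hdens)
  obtain ⟨L, hL⟩ := hbal
  obtain ⟨L', hL'⟩ := exists_tendsto_sum_Ioo_inv hL hsq
  obtain ⟨δ, hδ, hsep⟩ := exists_pos_forall_le_abs_sub hmono 0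
  exact not_polyDense_of_annihilators W lam 0 hδ hsep (Real.exp_pos _)
    (ENNReal.mul_ne_top ENNReal.ofReal_ne_top hsum.ne)
    (exists_nodalWeight_annihilator W hmono hneg hpos hx0 hsq hL' hS hp)

/-- main theorem, sufficiency: if there is a balanced zero-density sequence
`Λ = {λₙ}` whose characteristic sequence `{pₙ}` satisfies `Σ W(λₙ) exp(pₙ) < ∞`, then
polynomials are not dense in `C_W`. -/
theorem not_polyDense_of_characteristic_sum_finite
    (W : ℝ → ℝ≥0∞) (hW : IsWeight W)
    (lam : ℤ → ℝ) (hmono : StrictMono lam)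
    (htop : Tendsto lam atTop atTop) (hbot : Tendsto lam atBot atBot)
    (hneg : lam (-1) < 0) (hpos : 0 ≤ lam 0)
    -- zero density
    (hdens : Tendsto (fun A : ℝ => ((Set.range lam ∩ Set.Ioo (-A) A).ncard : ℝ) / (2 * A))
      atTop (𝓝 0))
    -- balanced
    (hbal : ∃ L : ℝ, Tendsto (fun N : ℕ =>
        ∑ n ∈ Finset.Ioo (-(N : ℤ)) (N : ℤ), lam n / (1 + lam n ^ 2)) atTop (𝓝 L))
    -- characteristic sequence
    (p S : ℤ → ℝ)
    (hS : ∀ n : ℤ, Tendsto (fun N : ℕ =>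
        ∑ k ∈ (Finset.Ioo (n - (N : ℤ)) (n + (N : ℤ))).erase n,
          Real.log ((1 + lam k ^ 2) / (lam k - lam n) ^ 2)) atTop (𝓝 (S n)))
    (hp : ∀ n : ℤ, p n = (Real.log (1 + lam n ^ 2) + S n) / 2)
    -- Σ W(λₙ) exp(pₙ) < ∞
    (hsum : (∑' n : ℤ, W (lam n) * ENNReal.ofReal (Real.exp (p n))) < ⊤) :
    ¬ PolyDenseCW W :=
  not_polyDense_of_characteristic_sum_finite_general W lam hmono htop hbot hneg hpos hdens hbal p S
    hS hp hsum
end
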